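/- For α > 3 and d ≥ 3, the (unnormalized) state αR_{1,2}⊗R_{3,4} + S_{1,2}⊗S_{3,4} is 1-distillable: there exists a vector |ψ⟩ of Schmidt rank 2 with respect to the Alice–Bob cut such that ⟨ψ| T_A(αR⊗R + S⊗S) |ψ⟩ < 0. -/

import Mathlib

open Matrix BigOperators

/-- The projection `P = |Φ⟩⟨Φ|` onto the maximally entangled state
`|Φ⟩ = (1/√d) ∑ᵢ |i⟩|i⟩` on `ℂ^d ⊗ ℂ^d`. -/
noncomputable def Pm (d : ℕ) : Matrix (Fin d × Fin d) (Fin d × Fin d) ℂ :=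
  Matrix.of fun p q =>
    ((if p.1 = p.2 then (1 : ℂ) else 0) * (if q.1 = q.2 then 1 else 0)) / d

/-- The swap operator `F = ∑ᵢⱼ |i⟩⟨j| ⊗ |j⟩⟨i|` on `ℂ^d ⊗ ℂ^d`. -/
def Fm (d : ℕ) : Matrix (Fin d × Fin d) (Fin d × Fin d) ℂ :=
  Matrix.of fun p q => if p.1 = q.2 ∧ p.2 = q.1 then (1 : ℂ) else 0

/-- The antisymmetric projection `R = (I - F)/2`. -/
noncomputable def Rm (d : ℕ) : Matrix (Fin d × Fin d) (Fin d × Fin d) ℂ :=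
  (1 / 2 : ℂ) • (1 - Fm d)

/-- The symmetric projection `S = (I + F)/2`. -/
noncomputable def Sm (d : ℕ) : Matrix (Fin d × Fin d) (Fin d × Fin d) ℂ :=
  (1 / 2 : ℂ) • (1 + Fm d)

/-- `Q = I - |Φ⟩⟨Φ|`. -/
noncomputable def Qm (d : ℕ) : Matrix (Fin d × Fin d) (Fin d × Fin d) ℂ :=
  1 - Pm d

/-- Partial transpose over the first tensor factor of `ℂ^d ⊗ ℂ^d`,
with respect to the standard basis: entrywise,
`(T M)[(i,j),(k,l)] = M[(k,j),(i,l)]`. -/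
def ptA (d : ℕ) (M : Matrix (Fin d × Fin d) (Fin d × Fin d) ℂ) :
    Matrix (Fin d × Fin d) (Fin d × Fin d) ℂ :=
  Matrix.of fun p q => M (q.1, p.2) (p.1, q.2)

/-- Tensor product `M ⊗ N` of two operators on `ℂ^d ⊗ ℂ^d`, acting on
registers `((X₁,X₂),(X₃,X₄))` with `M` on `(X₁,X₂)` and `N` on `(X₃,X₄)`. -/
def kron (d : ℕ) (M N : Matrix (Fin d × Fin d) (Fin d × Fin d) ℂ) :
    Matrix ((Fin d × Fin d) × (Fin d × Fin d)) ((Fin d × Fin d) × (Fin d × Fin d)) ℂ :=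
  Matrix.of fun p q => M p.1 q.1 * N p.2 q.2

/-- Partial transpose over Alice's registers `X₁, X₃` (the first factor of
each pair), on registers ordered `((X₁,X₂),(X₃,X₄))`. -/
def pt13 (d : ℕ)
    (M : Matrix ((Fin d × Fin d) × (Fin d × Fin d)) ((Fin d × Fin d) × (Fin d × Fin d)) ℂ) :
    Matrix ((Fin d × Fin d) × (Fin d × Fin d)) ((Fin d × Fin d) × (Fin d × Fin d)) ℂ :=
  Matrix.of fun p q =>
    M ((q.1.1, p.1.2), (q.2.1, p.2.2)) ((p.1.1, q.1.2), (p.2.1, q.2.2))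

/-!
Take `ψ = |aa⟩_A|aa⟩_B - |bb⟩_A|bb⟩_B` for `a ≠ b`: its Alice-by-Bob reshaping is diagonal with
two nonzero entries, so it has Schmidt rank 2. On the vectors `|ii⟩` the partial transposes of
`R` and `S` have entries `0, 1` on the diagonal and `-1/2, 1/2` off it (the partial transpose of
the swap is `d` times the projection onto the maximally entangled state), so
`⟨ψ|T_A(αR⊗R + S⊗S)|ψ⟩ = 2 - (α + 1)/2 = (3 - α)/2 < 0`.
-/

lemma star_dotProduct_mulVec_single_sub_single {R n : Type*} [CommRing R] [StarRing R]
    [Fintype n] [DecidableEq n] (A : Matrix n n R) (i j : n) :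
    star (Pi.single i 1 - Pi.single j 1 : n → R) ⬝ᵥ A *ᵥ (Pi.single i 1 - Pi.single j 1)
      = A i i - A i j - A j i + A j j := by
  simp only [star_sub, Pi.star_single, star_one, mulVec_sub, mulVec_single_one, sub_dotProduct,
    dotProduct_sub, single_one_dotProduct, col_apply]
  ring

lemma rank_diagonal_single_sub_single {K n : Type*} [Field K] [Fintype n] [DecidableEq n]
    {i j : n} (hij : i ≠ j) :
    (diagonal (Pi.single i 1 - Pi.single j 1 : n → K)).rank = 2 := by
  classical
  have support : (Finset.univ.filter fun k => (Pi.single i 1 - Pi.single j 1 : n → K) k ≠ 0)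
      = {i, j} := by
    ext k
    by_cases hi : k = i <;> by_cases hj : k = j <;> simp_all [Pi.single_apply]
  rw [rank_diagonal, Fintype.card_subtype, support, Finset.card_pair hij]

lemma of_single_sub_single_eq_diagonal {α R : Type*} [DecidableEq α] [Ring R] (a b : α) :
    Matrix.of (fun x y : α × α =>
        (Pi.single ((a, a), (a, a)) 1 - Pi.single ((b, b), (b, b)) 1 : (α × α) × (α × α) → R)
          ((x.1, y.1), (x.2, y.2)))
      = diagonal (Pi.single (a, a) 1 - Pi.single (b, b) 1) := by
  ext ⟨x₁, x₂⟩ ⟨y₁, y₂⟩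
  simp only [of_apply, diagonal_apply, Pi.sub_apply, Pi.single_apply, Prod.mk.injEq]
  grind

section PartialTranspose

variable {d : ℕ}

lemma pt13_add
    (X Y : Matrix ((Fin d × Fin d) × (Fin d × Fin d)) ((Fin d × Fin d) × (Fin d × Fin d)) ℂ) :
    pt13 d (X + Y) = pt13 d X + pt13 d Y := rfl

lemma pt13_smul (c : ℂ)
    (X : Matrix ((Fin d × Fin d) × (Fin d × Fin d)) ((Fin d × Fin d) × (Fin d × Fin d)) ℂ) :
    pt13 d (c • X) = c • pt13 d X := rfl

lemma pt13_kron (M N : Matrix (Fin d × Fin d) (Fin d × Fin d) ℂ) :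
    pt13 d (kron d M N) = kron d (ptA d M) (ptA d N) := rfl

lemma ptA_Rm_apply_self (i : Fin d) : ptA d (Rm d) (i, i) (i, i) = 0 := by
  simp [ptA, Rm, Fm]

lemma ptA_Sm_apply_self (i : Fin d) : ptA d (Sm d) (i, i) (i, i) = 1 := by
  norm_num [ptA, Sm, Fm]

lemma ptA_Rm_apply_of_ne {i j : Fin d} (hij : i ≠ j) : ptA d (Rm d) (i, i) (j, j) = -1 / 2 := by
  norm_num [ptA, Rm, Fm, one_apply, hij.symm]

lemma ptA_Sm_apply_of_ne {i j : Fin d} (hij : i ≠ j) : ptA d (Sm d) (i, i) (j, j) = 1 / 2 := by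
  simp [ptA, Sm, Fm, one_apply, hij.symm]

lemma pt13_apply_self (c : ℂ) (i : Fin d) :
    pt13 d (c • kron d (Rm d) (Rm d) + kron d (Sm d) (Sm d)) ((i, i), (i, i)) ((i, i), (i, i))
      = 1 := by
  rw [pt13_add, pt13_smul, pt13_kron, pt13_kron]
  simp [kron, ptA_Rm_apply_self, ptA_Sm_apply_self]

lemma pt13_apply_of_ne (c : ℂ) {i j : Fin d} (hij : i ≠ j) :
    pt13 d (c • kron d (Rm d) (Rm d) + kron d (Sm d) (Sm d)) ((i, i), (i, i)) ((j, j), (j, j))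
      = (c + 1) / 4 := by
  rw [pt13_add, pt13_smul, pt13_kron, pt13_kron]
  simp only [Matrix.add_apply, Matrix.smul_apply, kron, of_apply, ptA_Rm_apply_of_ne hij,
    ptA_Sm_apply_of_ne hij, smul_eq_mul]
  ring

end PartialTranspose

/-- For `α > 3` the (unnormalized) state `α R₁₂⊗R₃₄ + S₁₂⊗S₃₄` is 1-distillable:
there is a vector `ψ` of Schmidt rank 2 with respect to the Alice–Bob cut
(Alice holds registers 1,3 and Bob registers 2,4; the Schmidt rank is the rank
of the reshaping of `ψ` into an Alice-by-Bob matrix) with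
`⟨ψ| T_A(α R⊗R + S⊗S) |ψ⟩ < 0`. -/
theorem stmt11 (d : ℕ) (hd : 3 ≤ d) (α : ℝ) (hα : 3 < α) :
    ∃ ψ : ((Fin d × Fin d) × (Fin d × Fin d)) → ℂ,
      (Matrix.of (fun a b : Fin d × Fin d => ψ ((a.1, b.1), (a.2, b.2))) :
          Matrix (Fin d × Fin d) (Fin d × Fin d) ℂ).rank = 2 ∧
      (star ψ ⬝ᵥ
          (pt13 d ((α : ℂ) • kron d (Rm d) (Rm d) + kron d (Sm d) (Sm d))).mulVec ψ).re
        < 0 := by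
  let a : Fin d := ⟨0, by omega⟩
  let b : Fin d := ⟨1, by omega⟩
  have hab : a ≠ b := by simp [a, b, Fin.ext_iff]
  refine ⟨Pi.single ((a, a), (a, a)) 1 - Pi.single ((b, b), (b, b)) 1, ?_, ?_⟩
  · rw [of_single_sub_single_eq_diagonal, rank_diagonal_single_sub_single (by simp [hab])]
  · rw [star_dotProduct_mulVec_single_sub_single, pt13_apply_self, pt13_apply_self, pt13_apply_of_ne _ hab, pt13_apply_of_ne _ hab.symm]
    have hre : (1 - ((α : ℂ) + 1) / 4 - ((α : ℂ) + 1) / 4 + 1).re = (3 - α) / 2 := by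
      simp only [Complex.add_re, Complex.sub_re, Complex.one_re, Complex.div_ofNat_re,
        Complex.ofReal_re]
      ring
    linarith
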